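/- arXiv:math/0603596 — 2 statements merged into one kernel-verified Lean document; each statement's English description precedes it below -/
import Mathlib

section
/- If a finite-dimensional real Lie algebra g admits an abelian generalized complex structure (for some closed 3-form H on g), then g is at most 2-step nilpotent: [[X,Y],Z] = 0 for all X, Y, Z ∈ g. -/
set_option linter.unusedSectionVars false

open scoped TensorProduct

noncomputable section

namespace GKTest

variable {g : Type} [LieRing g] [LieAlgebra ℝ g]

/-- Auxiliary reindexing: `skip2 i j m` is the `m`-th element (0-indexed) of
`{0,…,k} \ {i,j}` when `i < j`. -/
def skip2 (i j m : ℕ) : ℕ := if m < i then m else if m + 1 < j then m + 1 else m + 2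

lemma skip2_le (i j m : ℕ) : skip2 i j m ≤ m + 2 := by
  unfold skip2; split_ifs <;> omega

/-- The argument list `(⁅X i, X j⁆, X₀, …, X̂ᵢ, …, X̂ⱼ, …, X_k)` used in the
Chevalley–Eilenberg formula. -/
def ceArg {k : ℕ} (X : Fin (k + 1) → g) (i j : Fin (k + 1)) : Fin k → g :=
  fun l =>
    if h : (l : ℕ) = 0 then ⁅X i, X j⁆
    else X ⟨skip2 (i : ℕ) (j : ℕ) ((l : ℕ) - 1), by
      have h1 := skip2_le (i : ℕ) (j : ℕ) ((l : ℕ) - 1)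
      have h2 := l.isLt
      omega⟩

/-- The Chevalley–Eilenberg differential of an alternating `k`-form, as a raw function:
`dα(X₀,…,X_k) = ∑_{i<j} (−1)^{i+j} α(⁅X_i,X_j⁆, X₀,…,X̂ᵢ,…,X̂ⱼ,…,X_k)`. -/
def ceD {k : ℕ} (α : g [⋀^Fin k]→ₗ[ℝ] ℝ) (X : Fin (k + 1) → g) : ℝ :=
  ∑ i : Fin (k + 1), ∑ j : Fin (k + 1),
    if (i : ℕ) < (j : ℕ) then (-1 : ℝ) ^ ((i : ℕ) + (j : ℕ)) * α (ceArg X i j) else 0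

lemma upd0 (X Y Z W : g) : Function.update ![X, Y, Z] 0 W = ![W, Y, Z] := by
  funext l; fin_cases l <;> simp [Function.update]

lemma upd1 (X Y Z W : g) : Function.update ![X, Y, Z] 1 W = ![X, W, Z] := by
  funext l; fin_cases l <;> simp [Function.update]

lemma upd2 (X Y Z W : g) : Function.update ![X, Y, Z] 2 W = ![X, Y, W] := by
  funext l; fin_cases l <;> simp [Function.update]

variable (H : g [⋀^Fin 3]→ₗ[ℝ] ℝ)

lemma H_add2 (X Y : g) (a b : g) :
    H ![X, Y, a + b] = H ![X, Y, a] + H ![X, Y, b] := by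
  have h := H.toMultilinearMap.map_update_add ![X, Y, a] 2 a b
  simpa [upd2] using h

lemma H_smul2 (X Y : g) (c : ℝ) (a : g) :
    H ![X, Y, c • a] = c * H ![X, Y, a] := by
  have h := H.toMultilinearMap.map_update_smul ![X, Y, a] 2 c a
  simpa [upd2, smul_eq_mul] using h

lemma H_add0 (X X' Y Z : g) :
    H ![X + X', Y, Z] = H ![X, Y, Z] + H ![X', Y, Z] := by
  have h := H.toMultilinearMap.map_update_add ![X, Y, Z] 0 X X'
  simpa [upd0] using h

lemma H_smul0 (c : ℝ) (X Y Z : g) :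
    H ![c • X, Y, Z] = c * H ![X, Y, Z] := by
  have h := H.toMultilinearMap.map_update_smul ![X, Y, Z] 0 c X
  simpa [upd0, smul_eq_mul] using h

lemma H_add1 (X Y Y' Z : g) :
    H ![X, Y + Y', Z] = H ![X, Y, Z] + H ![X, Y', Z] := by
  have h := H.toMultilinearMap.map_update_add ![X, Y, Z] 1 Y Y'
  simpa [upd1] using h

lemma H_smul1 (c : ℝ) (X Y Z : g) :
    H ![X, c • Y, Z] = c * H ![X, Y, Z] := by
  have h := H.toMultilinearMap.map_update_smul ![X, Y, Z] 1 c Y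
  simpa [upd1, smul_eq_mul] using h

/-- The contraction `ι_Y ι_X H = H(X, Y, ·)` as a linear functional. -/
def hContr (X Y : g) : Module.Dual ℝ g where
  toFun Z := H ![X, Y, Z]
  map_add' a b := H_add2 H X Y a b
  map_smul' c a := by simpa using H_smul2 H X Y c a

@[simp] lemma hContr_apply (X Y Z : g) : hContr H X Y Z = H ![X, Y, Z] := rfl

/-- The dual (second) component of the Courant bracket:
`ad*_X η − ad*_Y ξ + H(X,Y,·)` where `(ad*_X η)(Z) = −η(⁅X,Z⁆)`. -/
def courantDual (a b : g × Module.Dual ℝ g) : Module.Dual ℝ g :=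
  -(b.2 ∘ₗ (LieAlgebra.ad ℝ g a.1 : g →ₗ[ℝ] g)) +
    a.2 ∘ₗ (LieAlgebra.ad ℝ g b.1 : g →ₗ[ℝ] g) + hContr H a.1 b.1

@[simp] lemma courantDual_apply (a b : g × Module.Dual ℝ g) (Z : g) :
    courantDual H a b Z = -(b.2 ⁅a.1, Z⁆) + a.2 ⁅b.1, Z⁆ + H ![a.1, b.1, Z] := by
  simp [courantDual]

/-- The Courant bracket on `g ⊕ g*` (with background closed 3-form `H`), as a bilinear map:
`⟦(X,ξ),(Y,η)⟧ = (⁅X,Y⁆, ad*_X η − ad*_Y ξ + H(X,Y,·))`. -/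
def courant : (g × Module.Dual ℝ g) →ₗ[ℝ] (g × Module.Dual ℝ g) →ₗ[ℝ] (g × Module.Dual ℝ g) :=
  LinearMap.mk₂ ℝ (fun a b => (⁅a.1, b.1⁆, courantDual H a b))
    (fun a a' b => by
      refine Prod.ext (by simp [add_lie]) ?_
      ext Z
      simp [courantDual_apply, add_lie, H_add0, map_add]
      ring)
    (fun c a b => by
      refine Prod.ext (by simp [smul_lie]) ?_
      ext Z
      simp [courantDual_apply, smul_lie, H_smul0, map_smul, smul_eq_mul]
      ring)
    (fun a b b' => by
      refine Prod.ext (by simp [lie_add]) ?_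
      ext Z
      simp [courantDual_apply, lie_add, H_add1, map_add]
      ring)
    (fun c a b => by
      refine Prod.ext (by simp [lie_smul]) ?_
      ext Z
      simp [courantDual_apply, lie_smul, H_smul1, map_smul, smul_eq_mul]
      ring)

@[simp] lemma courant_apply (a b : g × Module.Dual ℝ g) :
    courant H a b = (⁅a.1, b.1⁆, courantDual H a b) := rfl

/-- The natural pairing `⟨(X,ξ),(Y,η)⟩ = ½(η(X) + ξ(Y))` on `g ⊕ g*`. -/
def npair {V : Type} [AddCommGroup V] [Module ℝ V]
    (a b : V × Module.Dual ℝ V) : ℝ :=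
  (b.2 a.1 + a.2 b.1) / 2

/-- The `ℂ`-bilinear extension of an `ℝ`-bilinear map to the complexification. -/
def cxBil {M : Type} [AddCommGroup M] [Module ℝ M]
    (B : M →ₗ[ℝ] M →ₗ[ℝ] M) : (ℂ ⊗[ℝ] M) →ₗ[ℂ] (ℂ ⊗[ℝ] M) →ₗ[ℂ] (ℂ ⊗[ℝ] M) :=
  TensorProduct.curry (((TensorProduct.lift B).baseChange ℂ) ∘ₗ
    (TensorProduct.AlgebraTensorModule.distribBaseChange ℝ ℂ M M).symm.toLinearMap)

/-- The `i`-eigenspace of the `ℂ`-linear extension of `J` in the complexification. -/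
def eigI {M : Type} [AddCommGroup M] [Module ℝ M] (J : M →ₗ[ℝ] M) :
    Submodule ℂ (ℂ ⊗[ℝ] M) :=
  Module.End.eigenspace (J.baseChange ℂ) Complex.I

/-- The `(−i)`-eigenspace (i.e. the complex conjugate of the `i`-eigenspace). -/
def eigIbar {M : Type} [AddCommGroup M] [Module ℝ M] (J : M →ₗ[ℝ] M) :
    Submodule ℂ (ℂ ⊗[ℝ] M) :=
  Module.End.eigenspace (J.baseChange ℂ) (-Complex.I)

/-- A generalized complex structure on a Lie algebra `g` with closed 3-form `H`:
an `ℝ`-linear `J` on `g ⊕ g*` with `J² = −id`, preserving the natural pairing, whose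
`i`-eigenspace in the complexification is closed under the (complexified) Courant bracket. -/
def IsGCS (J : (g × Module.Dual ℝ g) →ₗ[ℝ] (g × Module.Dual ℝ g)) : Prop :=
  (∀ v, J (J v) = -v) ∧
  (∀ u v, npair (J u) (J v) = npair u v) ∧
  (∀ u ∈ eigI J, ∀ v ∈ eigI J, cxBil (courant H) u v ∈ eigI J)

end GKTest

namespace GKTest

/-- An *abelian* generalized complex structure: the Courant bracket (extended
`ℂ`-bilinearly) vanishes identically on the `i`-eigenspace `L`. -/
def IsAbelianGCS {g : Type} [LieRing g] [LieAlgebra ℝ g] (H : g [⋀^Fin 3]→ₗ[ℝ] ℝ)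
    (J : (g × Module.Dual ℝ g) →ₗ[ℝ] (g × Module.Dual ℝ g)) : Prop :=
  IsGCS H J ∧ ∀ u ∈ eigI J, ∀ v ∈ eigI J, cxBil (courant H) u v = 0

/-!
Write `X'` for the `g`-component of `J (X, 0)`. Taking real and imaginary parts of
`⟦a - i J a, b - i J b⟧ = 0` gives `⟦J a, J b⟧ = ⟦a, b⟧` and `⟦J a, b⟧ + ⟦a, J b⟧ = 0`.
On vectors, the `g`-component of the second identity makes `⁅X', Y⁆` symmetric in `X`, `Y`;
with `a = (0, ξ)` its `g*`-component makes `ξ ⁅X', Y⁆` skew. So every `X'` is central, and the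
first identity gives `⁅X, Y⁆ = ⁅X', Y'⁆ = 0`: `g` is abelian.
-/

section Complexification

variable {M : Type} [AddCommGroup M] [Module ℝ M]

lemma cxBil_tmul (B : M →ₗ[ℝ] M →ₗ[ℝ] M) (z w : ℂ) (m n : M) :
    cxBil B (z ⊗ₜ[ℝ] m) (w ⊗ₜ[ℝ] n) = (z * w) ⊗ₜ[ℝ] B m n := by
  simp [cxBil, TensorProduct.AlgebraTensorModule.distribBaseChange,
    TensorProduct.AlgebraTensorModule.assoc, TensorProduct.smul_tmul', smul_eq_mul, mul_comm]

-- Apply `Re ⊗ id` and `Im ⊗ id`.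
lemma eq_zero_of_one_tmul_sub_I_tmul_eq_zero {x y : M}
    (h : (1 : ℂ) ⊗ₜ[ℝ] x - Complex.I ⊗ₜ[ℝ] y = 0) : x = 0 ∧ y = 0 := by
  constructor
  · simpa using congrArg (TensorProduct.lift ((LinearMap.lsmul ℝ M).comp Complex.reLm)) h
  · simpa using congrArg (TensorProduct.lift ((LinearMap.lsmul ℝ M).comp Complex.imLm)) h

lemma one_tmul_sub_I_tmul_mem_eigI {J : M →ₗ[ℝ] M} (hJ : ∀ v, J (J v) = -v) (a : M) :
    (1 : ℂ) ⊗ₜ[ℝ] a - Complex.I ⊗ₜ[ℝ] J a ∈ eigI J := by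
  rw [eigI, Module.End.mem_eigenspace_iff, map_sub, LinearMap.baseChange_tmul,
    LinearMap.baseChange_tmul, hJ, smul_sub, TensorProduct.smul_tmul', TensorProduct.smul_tmul']
  simp only [smul_eq_mul, mul_one, Complex.I_mul_I, TensorProduct.tmul_neg, TensorProduct.neg_tmul]
  abel

lemma cxBil_one_tmul_sub_I_tmul (B : M →ₗ[ℝ] M →ₗ[ℝ] M) (J : M →ₗ[ℝ] M) (a b : M) :
    cxBil B ((1 : ℂ) ⊗ₜ[ℝ] a - Complex.I ⊗ₜ[ℝ] J a) ((1 : ℂ) ⊗ₜ[ℝ] b - Complex.I ⊗ₜ[ℝ] J b) =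
      (1 : ℂ) ⊗ₜ[ℝ] (B a b - B (J a) (J b)) - Complex.I ⊗ₜ[ℝ] (B (J a) b + B a (J b)) := by
  simp only [map_sub, LinearMap.sub_apply, cxBil_tmul, one_mul, mul_one, Complex.I_mul_I,
    TensorProduct.tmul_sub, TensorProduct.tmul_add, TensorProduct.neg_tmul]
  abel

theorem apply_eq_and_add_eq_zero_of_cxBil_eigI_eq_zero {B : M →ₗ[ℝ] M →ₗ[ℝ] M}
    {J : M →ₗ[ℝ] M} (hJ : ∀ v, J (J v) = -v)
    (hB : ∀ u ∈ eigI J, ∀ v ∈ eigI J, cxBil B u v = 0) (a b : M) :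
    B (J a) (J b) = B a b ∧ B (J a) b + B a (J b) = 0 := by
  have h := hB _ (one_tmul_sub_I_tmul_mem_eigI hJ a) _ (one_tmul_sub_I_tmul_mem_eigI hJ b)
  rw [cxBil_one_tmul_sub_I_tmul] at h
  obtain ⟨h₁, h₂⟩ := eq_zero_of_one_tmul_sub_I_tmul_eq_zero h
  exact ⟨(sub_eq_zero.mp h₁).symm, h₂⟩

end Complexification

namespace IsAbelianGCS

variable {g : Type} [LieRing g] [LieAlgebra ℝ g] {H : g [⋀^Fin 3]→ₗ[ℝ] ℝ}
  {J : (g × Module.Dual ℝ g) →ₗ[ℝ] (g × Module.Dual ℝ g)}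

lemma courant_J_J (hJ : IsAbelianGCS H J) (a b : g × Module.Dual ℝ g) :
    courant H (J a) (J b) = courant H a b :=
  (apply_eq_and_add_eq_zero_of_cxBil_eigI_eq_zero hJ.1.1 hJ.2 a b).1

lemma courant_J_add_courant_J (hJ : IsAbelianGCS H J) (a b : g × Module.Dual ℝ g) :
    courant H (J a) b + courant H a (J b) = 0 :=
  (apply_eq_and_add_eq_zero_of_cxBil_eigI_eq_zero hJ.1.1 hJ.2 a b).2

lemma lie_J_fst_comm (hJ : IsAbelianGCS H J) (Y Z : g) :
    ⁅(J (Y, 0)).1, Z⁆ = ⁅(J (Z, 0)).1, Y⁆ := by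
  have h := congrArg Prod.fst (hJ.courant_J_add_courant_J (Z, 0) (Y, 0))
  simp only [Prod.fst_add, courant_apply, Prod.fst_zero] at h
  rw [eq_neg_of_add_eq_zero_left h, lie_skew]

lemma lie_J_fst_anticomm (hJ : IsAbelianGCS H J) (Y Z : g) :
    ⁅(J (Y, 0)).1, Z⁆ = -⁅(J (Z, 0)).1, Y⁆ := by
  rw [eq_neg_iff_add_eq_zero, ← Module.forall_dual_apply_eq_zero_iff ℝ]
  intro ξ
  -- Both terms on the right are skew in `Y` and `Z`.
  have dual_part : ∀ Y Z : g, ξ ⁅(J (Y, 0)).1, Z⁆ =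
      -((J (0, ξ)).2 ⁅Y, Z⁆ + H ![(J (0, ξ)).1, Y, Z]) := by
    intro Y Z
    have h := LinearMap.congr_fun (congrArg Prod.snd (hJ.courant_J_add_courant_J (0, ξ) (Y, 0))) Z
    simp only [Prod.snd_add, courant_apply, LinearMap.add_apply, courantDual_apply,
      LinearMap.zero_apply, zero_lie, map_zero, neg_zero, zero_add, Prod.snd_zero,
      H.map_coord_zero (0 : Fin 3) (by simp : ![0, (J (Y, 0)).1, Z] 0 = 0), add_zero] at h
    linear_combination h
  have H_swap : H ![(J (0, ξ)).1, Z, Y] = -H ![(J (0, ξ)).1, Y, Z] := by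
    have h := H.map_swap ![(J (0, ξ)).1, Y, Z] (i := 1) (j := 2) (by decide)
    convert h using 2
    funext l; fin_cases l <;> simp [Equiv.swap_apply_def]
  rw [map_add, dual_part, dual_part, H_swap, ← lie_skew Y Z, map_neg]
  ring

lemma lie_J_fst_eq_zero (hJ : IsAbelianGCS H J) (Y Z : g) : ⁅(J (Y, 0)).1, Z⁆ = 0 := by
  have h := hJ.lie_J_fst_anticomm Y Z
  rw [← hJ.lie_J_fst_comm Y Z, eq_neg_iff_add_eq_zero, ← two_smul ℝ, smul_eq_zero] at h
  exact h.resolve_left two_ne_zero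

theorem isLieAbelian (hJ : IsAbelianGCS H J) : IsLieAbelian g where
  trivial X Y := by
    have h := congrArg Prod.fst (hJ.courant_J_J (X, 0) (Y, 0))
    simp only [courant_apply] at h
    rw [← h, hJ.lie_J_fst_eq_zero]

end IsAbelianGCS

theorem two_step_nilpotent_of_abelian_GCS_general
    (g : Type) [LieRing g] [LieAlgebra ℝ g]
    (H : g [⋀^Fin 3]→ₗ[ℝ] ℝ)
    (J : (g × Module.Dual ℝ g) →ₗ[ℝ] (g × Module.Dual ℝ g))
    (hJ : IsAbelianGCS H J) :
    ∀ X Y Z : g, ⁅⁅X, Y⁆, Z⁆ = 0 := by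
  have := hJ.isLieAbelian
  intro X Y Z
  exact trivial_lie_zero g g _ _

/-- If a finite-dimensional real Lie algebra admits an abelian
generalized complex structure (for some closed 3-form `H`), then it is at most
2-step nilpotent. -/
theorem two_step_nilpotent_of_abelian_GCS
    (g : Type) [LieRing g] [LieAlgebra ℝ g] [FiniteDimensional ℝ g]
    (H : g [⋀^Fin 3]→ₗ[ℝ] ℝ) (hH : ∀ X : Fin 4 → g, ceD H X = 0)
    (J : (g × Module.Dual ℝ g) →ₗ[ℝ] (g × Module.Dual ℝ g))
    (hJ : IsAbelianGCS H J) :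
    ∀ X Y Z : g, ⁅⁅X, Y⁆, Z⁆ = 0 :=
  two_step_nilpotent_of_abelian_GCS_general g H J hJ

end GKTest
end
end

section
/- Let g be a finite-dimensional nilpotent real Lie algebra and H an alternating 3-form on g with dH = 0. Then g ⊕ g* equipped with the Courant bracket ⟦(X,ξ),(Y,η)⟧ = ([X,Y], ad*_X η − ad*_Y ξ + H(X,Y,·)) is a nilpotent Lie algebra. -/
/-!
Antisymmetry and the Jacobi identity are direct computations: in the dual component of the
Jacobiator the terms involving `ξ, η, ζ` cancel by the Jacobi identity of `g`, and the `H`-terms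
evaluated at `W` add up to `-dH(X, Y, Z, W)`.

For nilpotency let `gᵐ = 0` in the lower central series. The vector part of an `m`-fold iterated
bracket lies in `gᵐ = 0`. Once the vector part vanishes, bracketing with `(X, ξ)` just precomposes
the dual part with `-ad_X`, so after `m` further brackets the dual part vanishes on all of `g`.
Hence every `2m`-fold iterated bracket is zero.
-/

set_option linter.unusedSectionVars false

open scoped TensorProduct

noncomputable section

section ThreeForms

variable {R M N : Type*} [CommRing R] [AddCommGroup M] [Module R M] [AddCommGroup N] [Module R N]
  (f : M [⋀^Fin 3]→ₗ[R] N)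

theorem AlternatingMap.map_fin3_swap01 (a b c : M) : f ![b, a, c] = -f ![a, b, c] := by
  have e : ![a, b, c] ∘ Equiv.swap (0 : Fin 3) 1 = ![b, a, c] := by
    funext l; fin_cases l <;> rfl
  rw [← e, f.map_swap _ (by decide)]

theorem AlternatingMap.map_fin3_swap12 (a b c : M) : f ![a, c, b] = -f ![a, b, c] := by
  have e : ![a, b, c] ∘ Equiv.swap (1 : Fin 3) 2 = ![a, c, b] := by
    funext l; fin_cases l <;> rfl
  rw [← e, f.map_swap _ (by decide)]

theorem AlternatingMap.map_fin3_cycle (a b c : M) : f ![c, a, b] = f ![a, b, c] := by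
  rw [f.map_fin3_swap01 a c b, f.map_fin3_swap12, neg_neg]

theorem AlternatingMap.map_fin3_neg0 (a b c : M) : f ![-a, b, c] = -f ![a, b, c] := by
  have e : ∀ x : M, Function.update ![a, b, c] 0 x = ![x, b, c] := by
    intro x; funext l; fin_cases l <;> rfl
  simpa only [e] using f.map_update_neg ![a, b, c] 0 a

end ThreeForms

namespace GKTest

section Courant

variable {g : Type} [LieRing g] [LieAlgebra ℝ g] (H : g [⋀^Fin 3]→ₗ[ℝ] ℝ)

theorem ceD_three_apply (α : g [⋀^Fin 3]→ₗ[ℝ] ℝ) (X Y Z W : g) :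
    ceD α ![X, Y, Z, W] =
      -α ![⁅X, Y⁆, Z, W] + α ![⁅X, Z⁆, Y, W] - α ![⁅X, W⁆, Y, Z]
        - α ![⁅Y, Z⁆, X, W] + α ![⁅Y, W⁆, X, Z] - α ![⁅Z, W⁆, X, Y] := by
  have h01 : ceArg ![X, Y, Z, W] 0 1 = ![⁅X, Y⁆, Z, W] := by funext k; fin_cases k <;> rfl
  have h02 : ceArg ![X, Y, Z, W] 0 2 = ![⁅X, Z⁆, Y, W] := by funext k; fin_cases k <;> rfl
  have h03 : ceArg ![X, Y, Z, W] 0 3 = ![⁅X, W⁆, Y, Z] := by funext k; fin_cases k <;> rfl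
  have h12 : ceArg ![X, Y, Z, W] 1 2 = ![⁅Y, Z⁆, X, W] := by funext k; fin_cases k <;> rfl
  have h13 : ceArg ![X, Y, Z, W] 1 3 = ![⁅Y, W⁆, X, Z] := by funext k; fin_cases k <;> rfl
  have h23 : ceArg ![X, Y, Z, W] 2 3 = ![⁅Z, W⁆, X, Y] := by funext k; fin_cases k <;> rfl
  simp only [ceD, Fin.sum_univ_succ, Fin.sum_univ_zero, Fin.reduceSucc]
  norm_num [h01, h02, h03, h12, h13, h23]
  ring

theorem courant_antisymm (a b : g × Module.Dual ℝ g) : courant H a b = -courant H b a := by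
  refine Prod.ext (lie_skew a.1 b.1).symm ?_
  ext Z
  simp only [courant_apply, Prod.snd_neg, LinearMap.neg_apply, courantDual_apply,
    H.map_fin3_swap01 b.1 a.1]
  ring

theorem courant_jacobi (hH : ∀ X : Fin 4 → g, ceD H X = 0) (a b c : g × Module.Dual ℝ g) :
    courant H (courant H a b) c + courant H (courant H b c) a + courant H (courant H c a) b = 0 := by
  refine Prod.ext ?_ ?_
  · simp only [courant_apply, Prod.fst_add, Prod.fst_zero]
    rw [← lie_skew ⁅a.1, b.1⁆, ← lie_skew ⁅b.1, c.1⁆, ← lie_skew ⁅c.1, a.1⁆, ← neg_add, ← neg_add,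
      lie_jacobi c.1 a.1 b.1, neg_zero]
  ext Z
  have jacobi_dual (ξ : Module.Dual ℝ g) (x y : g) :
      ξ ⁅⁅x, y⁆, Z⁆ = ξ ⁅x, ⁅y, Z⁆⁆ - ξ ⁅y, ⁅x, Z⁆⁆ := by
    rw [lie_lie, map_sub]
  have dH : ceD H ![a.1, b.1, c.1, Z] = 0 := hH _
  rw [ceD_three_apply, ← lie_skew a.1 c.1, H.map_fin3_neg0, H.map_fin3_cycle a.1 b.1,
    H.map_fin3_cycle b.1 c.1, H.map_fin3_swap12 ⁅b.1, Z⁆ c.1 a.1, H.map_fin3_cycle c.1 a.1] at dH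
  simp only [courant_apply, Prod.snd_add, Prod.snd_zero, LinearMap.add_apply,
    LinearMap.zero_apply, courantDual_apply]
  linear_combination -dH - jacobi_dual c.2 a.1 b.1 - jacobi_dual a.2 b.1 c.1
    - jacobi_dual b.2 c.1 a.1

theorem courant_of_fst_eq_zero (a b : g × Module.Dual ℝ g) (hb : b.1 = 0) :
    courant H a b = (0, -(b.2 ∘ₗ (LieAlgebra.ad ℝ g a.1 : g →ₗ[ℝ] g))) := by
  refine Prod.ext (by simp [hb]) ?_
  ext Z
  simp only [courant_apply, courantDual_apply, hb, zero_lie, map_zero, add_zero,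
    LinearMap.neg_apply, LinearMap.comp_apply, LieAlgebra.ad_apply]
  rw [H.map_coord_zero (1 : Fin 3) rfl, add_zero]

theorem foldr_courant_fst_mem_lowerCentralSeries (l : List (g × Module.Dual ℝ g))
    (x : g × Module.Dual ℝ g) :
    (l.foldr (fun u w => courant H u w) x).1 ∈ LieModule.lowerCentralSeries ℝ g g l.length := by
  induction l with
  | nil => simp
  | cons a l ih =>
    rw [List.foldr_cons, courant_apply, List.length_cons, LieModule.lowerCentralSeries_succ]
    exact LieSubmodule.lie_mem_lie (LieSubmodule.mem_top a.1) ih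

theorem foldr_courant_fst_eq_zero (l : List (g × Module.Dual ℝ g)) {x : g × Module.Dual ℝ g}
    (hx : x.1 = 0) : (l.foldr (fun u w => courant H u w) x).1 = 0 := by
  induction l with
  | nil => exact hx
  | cons a l ih => rw [List.foldr_cons, courant_of_fst_eq_zero H a _ ih]

theorem foldr_courant_snd_eq_zero_on_lowerCentralSeries (l : List (g × Module.Dual ℝ g))
    {x : g × Module.Dual ℝ g} (hx : x.1 = 0) {k : ℕ}
    (hxk : ∀ Z ∈ LieModule.lowerCentralSeries ℝ g g (k + l.length), x.2 Z = 0) :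
    ∀ Z ∈ LieModule.lowerCentralSeries ℝ g g k, (l.foldr (fun u w => courant H u w) x).2 Z = 0 := by
  induction l generalizing k with
  | nil => exact hxk
  | cons a l ih =>
    intro Z hZ
    have ha : ⁅a.1, Z⁆ ∈ LieModule.lowerCentralSeries ℝ g g (k + 1) := by
      rw [LieModule.lowerCentralSeries_succ]
      exact LieSubmodule.lie_mem_lie (LieSubmodule.mem_top a.1) hZ
    have hxk' : ∀ Z ∈ LieModule.lowerCentralSeries ℝ g g (k + 1 + l.length), x.2 Z = 0 := by
      rwa [List.length_cons, ← Nat.add_assoc, Nat.add_right_comm] at hxk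
    rw [List.foldr_cons, courant_of_fst_eq_zero H a _ (foldr_courant_fst_eq_zero H l hx)]
    exact neg_eq_zero.mpr (ih hxk' _ ha)

theorem foldr_courant_eq_zero {m : ℕ} (hm : LieModule.lowerCentralSeries ℝ g g m = ⊥)
    (l : List (g × Module.Dual ℝ g)) (hl : l.length = m + m) (x : g × Module.Dual ℝ g) :
    l.foldr (fun u w => courant H u w) x = 0 := by
  rw [← List.take_append_drop m l, List.foldr_append]
  have hy : ((l.drop m).foldr (fun u w => courant H u w) x).1 = 0 := by
    have h := foldr_courant_fst_mem_lowerCentralSeries H (l.drop m) x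
    rwa [List.length_drop, hl, Nat.add_sub_cancel, hm, LieSubmodule.mem_bot] at h
  refine Prod.ext (foldr_courant_fst_eq_zero H _ hy) (LinearMap.ext fun Z => ?_)
  refine foldr_courant_snd_eq_zero_on_lowerCentralSeries H _ hy (k := 0) ?_ Z (by simp)
  simp [hm, hl]

end Courant

theorem courant_nilpotent_of_nilpotent_general
    (g : Type) [LieRing g] [LieAlgebra ℝ g]
    [LieModule.IsNilpotent g g]
    (H : g [⋀^Fin 3]→ₗ[ℝ] ℝ) (hH : ∀ X : Fin 4 → g, ceD H X = 0) :
    (∀ a b : g × Module.Dual ℝ g, courant H a b = -courant H b a) ∧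
    (∀ a b c : g × Module.Dual ℝ g,
      courant H (courant H a b) c + courant H (courant H b c) a +
        courant H (courant H c a) b = 0) ∧
    (∃ n : ℕ, ∀ (a : Fin n → g × Module.Dual ℝ g) (x : g × Module.Dual ℝ g),
      (List.ofFn a).foldr (fun u w => courant H u w) x = 0) := by
  obtain ⟨m, hm⟩ := LieModule.IsNilpotent.nilpotent ℝ g g
  exact ⟨courant_antisymm H, courant_jacobi H hH,
    m + m, fun a => foldr_courant_eq_zero H hm (List.ofFn a) List.length_ofFn⟩

/-- If `g` is a finite-dimensional nilpotent real Lie algebra and `H` a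
closed 3-form on `g`, then `g ⊕ g*` with the Courant bracket is a nilpotent Lie algebra:
the bracket is antisymmetric, satisfies the Jacobi identity, and some iterated bracket
length is identically zero. -/
theorem courant_nilpotent_of_nilpotent
    (g : Type) [LieRing g] [LieAlgebra ℝ g] [FiniteDimensional ℝ g]
    [LieModule.IsNilpotent g g]
    (H : g [⋀^Fin 3]→ₗ[ℝ] ℝ) (hH : ∀ X : Fin 4 → g, ceD H X = 0) :
    (∀ a b : g × Module.Dual ℝ g, courant H a b = -courant H b a) ∧
    (∀ a b c : g × Module.Dual ℝ g,
      courant H (courant H a b) c + courant H (courant H b c) a +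
        courant H (courant H c a) b = 0) ∧
    (∃ n : ℕ, ∀ (a : Fin n → g × Module.Dual ℝ g) (x : g × Module.Dual ℝ g),
      (List.ofFn a).foldr (fun u w => courant H u w) x = 0) :=
  courant_nilpotent_of_nilpotent_general g H hH

end GKTest
end
end
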